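/- There exist constants 0 < c₁ ≤ c₂ (depending only on δ and ε, and in particular independent of ξ, σ, z, w) such that for every ξ ∈ ℝⁿ with |ξ| ≥ ε, every σ ∈ ℝ, and all complex numbers z, w: c₁·E₁ ≤ E ≤ c₂·E₁. -/

import Mathlib

/-!
Write `r = |ξ|`. The multiplier `ρ` is small enough that `4ρ²(1 + r^{2δ}) ≤ r^{2α}` and
`2ρ r^{2θ} ≤ r^{2α}`: both follow from `2ρ(1 + r^{2δ}) ≤ r^{2θ}` and `2ρ ≤ r^{2α-2θ}`, since
`r^{2θ} r^{2α-2θ} = r^{2α}`. The first inequality lets Cauchy–Schwarz and AM–GM bound the cross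
term by a quarter of the two diagonal terms, the second bounds the last term by a quarter of
`r^{2α+σ}|z|²`. So `E` lies between `1/4` and `1` times
`(1 + r^{2δ}) r^σ |w|² + r^{2α+σ} |z|²`, and `r^{2δ} ≤ 1 + r^{2δ} ≤ (1 + ε^{-2δ}) r^{2δ}`
because `r ≥ ε`.
-/

/-- The auxiliary multiplier `ρ(ξ)` used in the high frequency region. -/
noncomputable def rho (n : ℕ) (δ α θ ε : ℝ) (ξ : EuclideanSpace ℝ (Fin n)) : ℝ :=
  if 2 * θ ≤ α + δ then
    ε ^ (2 * α + 2 * δ - 4 * θ) * ‖ξ‖ ^ (2 * θ) / (2 * (1 + ‖ξ‖ ^ (2 * δ)))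
  else
    ε ^ (-2 * α + 4 * θ) * ‖ξ‖ ^ (2 * α - 2 * θ) / 4

lemma rpow_le_rpow_of_le_one_of_exponent_ge {ε r a b : ℝ} (hε0 : 0 ≤ ε) (hε1 : ε ≤ 1)
    (hεr : ε ≤ r) (hb : 0 ≤ b) (hba : b ≤ a) : ε ^ a ≤ r ^ b :=
  (Real.rpow_le_rpow_of_exponent_ge' hε0 hε1 hb hba).trans (Real.rpow_le_rpow hε0 hεr hb)

lemma one_le_rpow_neg_mul_rpow {ε r p : ℝ} (hε0 : 0 < ε) (hεr : ε ≤ r) (hp : 0 ≤ p) :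
    1 ≤ ε ^ (-p) * r ^ p := by
  rw [Real.rpow_neg hε0.le, one_le_inv_mul₀ (by positivity)]
  exact Real.rpow_le_rpow hε0.le hεr hp

lemma abs_mul_re_mul_conj_le {a b k : ℝ} (ha : 0 ≤ a) (hb : 0 ≤ b) (hk : 4 * k ^ 2 ≤ a * b)
    (z w : ℂ) : |k * (w * starRingEnd ℂ z).re| ≤ (a * ‖w‖ ^ 2 + b * ‖z‖ ^ 2) / 4 := by
  have hre : |(w * starRingEnd ℂ z).re| ≤ ‖w‖ * ‖z‖ := by
    simpa [norm_mul] using Complex.abs_re_le_norm (w * starRingEnd ℂ z)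
  have hamgm : 4 * |k| * (‖w‖ * ‖z‖) ≤ a * ‖w‖ ^ 2 + b * ‖z‖ ^ 2 := by
    refine (pow_le_pow_iff_left₀ (by positivity) (by positivity) two_ne_zero).mp ?_
    nlinarith [sq_nonneg (a * ‖w‖ ^ 2 - b * ‖z‖ ^ 2), sq_abs k,
      mul_le_mul_of_nonneg_right hk (by positivity : 0 ≤ 4 * (‖w‖ * ‖z‖) ^ 2)]
  rw [abs_mul]
  nlinarith [mul_le_mul_of_nonneg_left hre (abs_nonneg k)]

lemma quadratic_form_bounds {a b k t : ℝ} (ha : 0 ≤ a) (hb : 0 ≤ b) (hk : 4 * k ^ 2 ≤ a * b)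
    (ht0 : 0 ≤ t) (htb : 2 * t ≤ b) (z w : ℂ) :
    (a * ‖w‖ ^ 2 + b * ‖z‖ ^ 2) / 4 ≤
        a / 2 * ‖w‖ ^ 2 + b / 2 * ‖z‖ ^ 2 + k * (w * starRingEnd ℂ z).re + t / 2 * ‖z‖ ^ 2 ∧
      a / 2 * ‖w‖ ^ 2 + b / 2 * ‖z‖ ^ 2 + k * (w * starRingEnd ℂ z).re + t / 2 * ‖z‖ ^ 2 ≤
        a * ‖w‖ ^ 2 + b * ‖z‖ ^ 2 := by
  obtain ⟨hcross_lo, hcross_hi⟩ := abs_le.mp (abs_mul_re_mul_conj_le ha hb hk z w)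
  have hz : 0 ≤ ‖z‖ ^ 2 := by positivity
  exact ⟨by nlinarith [mul_nonneg ht0 hz], by nlinarith [mul_le_mul_of_nonneg_right htb hz]⟩

section rho

variable {n : ℕ} {δ α θ ε : ℝ} {ξ : EuclideanSpace ℝ (Fin n)}

lemma rho_nonneg (hε0 : 0 < ε) : 0 ≤ rho n δ α θ ε ξ := by
  unfold rho
  split_ifs <;> positivity

lemma rho_mul_le (hδ : 0 ≤ δ) (hε0 : 0 < ε) (hε1 : ε ≤ 1) (hξ : ε ≤ ‖ξ‖) :
    rho n δ α θ ε ξ * (2 * (1 + ‖ξ‖ ^ (2 * δ))) ≤ ‖ξ‖ ^ (2 * θ) := by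
  have hr : 0 < ‖ξ‖ := hε0.trans_le hξ
  unfold rho
  split_ifs with h
  · rw [div_mul_cancel₀ _ (by positivity)]
    exact mul_le_of_le_one_left (by positivity) (Real.rpow_le_one hε0.le hε1 (by linarith))
  · have hW : ε ^ (-2 * α + 4 * θ) * ‖ξ‖ ^ (2 * α - 2 * θ) ≤ ‖ξ‖ ^ (2 * θ) := calc
      _ ≤ ‖ξ‖ ^ (-2 * α + 4 * θ) * ‖ξ‖ ^ (2 * α - 2 * θ) := by
        gcongr
        linarith
      _ = _ := by rw [← Real.rpow_add hr]; ring_nf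
    have hWV : ε ^ (-2 * α + 4 * θ) * ‖ξ‖ ^ (2 * α - 2 * θ) * ‖ξ‖ ^ (2 * δ) ≤
        ‖ξ‖ ^ (2 * θ) := calc
      _ ≤ ‖ξ‖ ^ (-2 * α + 4 * θ - 2 * δ) * ‖ξ‖ ^ (2 * α - 2 * θ) * ‖ξ‖ ^ (2 * δ) := by
        gcongr
        exact rpow_le_rpow_of_le_one_of_exponent_ge hε0.le hε1 hξ (by linarith) (by linarith)
      _ = _ := by rw [← Real.rpow_add hr, ← Real.rpow_add hr]; ring_nf
    linarith

lemma rho_mul_two_le (hδ : 0 ≤ δ) (hε0 : 0 < ε) (hε1 : ε ≤ 1) (hξ : ε ≤ ‖ξ‖) :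
    rho n δ α θ ε ξ * 2 ≤ ‖ξ‖ ^ (2 * α - 2 * θ) := by
  have hr : 0 < ‖ξ‖ := hε0.trans_le hξ
  unfold rho
  split_ifs with h
  · rw [div_mul_eq_mul_div, div_le_iff₀ (by positivity)]
    have : ε ^ (2 * α + 2 * δ - 4 * θ) * ‖ξ‖ ^ (2 * θ) ≤
        ‖ξ‖ ^ (2 * α - 2 * θ) * ‖ξ‖ ^ (2 * δ) := calc
      _ ≤ ‖ξ‖ ^ (2 * α + 2 * δ - 4 * θ) * ‖ξ‖ ^ (2 * θ) := by
        gcongr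
        linarith
      _ = _ := by rw [← Real.rpow_add hr, ← Real.rpow_add hr]; ring_nf
    nlinarith [Real.rpow_pos_of_pos hr (2 * α - 2 * θ)]
  · have : ε ^ (-2 * α + 4 * θ) ≤ 1 := Real.rpow_le_one hε0.le hε1 (by linarith)
    nlinarith [Real.rpow_pos_of_pos hr (2 * α - 2 * θ)]

lemma four_mul_rho_sq_le (hδ : 0 ≤ δ) (hε0 : 0 < ε) (hε1 : ε ≤ 1) (hξ : ε ≤ ‖ξ‖) :
    4 * rho n δ α θ ε ξ ^ 2 * (1 + ‖ξ‖ ^ (2 * δ)) ≤ ‖ξ‖ ^ (2 * α) := by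
  have hr : 0 < ‖ξ‖ := hε0.trans_le hξ
  have hρ : 0 ≤ rho n δ α θ ε ξ := rho_nonneg hε0
  calc 4 * rho n δ α θ ε ξ ^ 2 * (1 + ‖ξ‖ ^ (2 * δ))
      = rho n δ α θ ε ξ * (2 * (1 + ‖ξ‖ ^ (2 * δ))) * (rho n δ α θ ε ξ * 2) := by ring
    _ ≤ ‖ξ‖ ^ (2 * θ) * ‖ξ‖ ^ (2 * α - 2 * θ) :=
      mul_le_mul (rho_mul_le hδ hε0 hε1 hξ) (rho_mul_two_le hδ hε0 hε1 hξ) (by positivity)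
        (by positivity)
    _ = ‖ξ‖ ^ (2 * α) := by rw [← Real.rpow_add hr]; ring_nf

lemma two_mul_rho_mul_le (hδ : 0 ≤ δ) (hε0 : 0 < ε) (hε1 : ε ≤ 1) (hξ : ε ≤ ‖ξ‖) :
    2 * rho n δ α θ ε ξ * ‖ξ‖ ^ (2 * θ) ≤ ‖ξ‖ ^ (2 * α) := by
  have hr : 0 < ‖ξ‖ := hε0.trans_le hξ
  calc 2 * rho n δ α θ ε ξ * ‖ξ‖ ^ (2 * θ) = rho n δ α θ ε ξ * 2 * ‖ξ‖ ^ (2 * θ) := by ring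
    _ ≤ ‖ξ‖ ^ (2 * α - 2 * θ) * ‖ξ‖ ^ (2 * θ) := by gcongr; exact rho_mul_two_le hδ hε0 hε1 hξ
    _ = ‖ξ‖ ^ (2 * α) := by rw [← Real.rpow_add hr]; ring_nf

end rho

theorem stmt_14_general (n : ℕ) (δ α θ ε : ℝ)
    (hδ : 0 ≤ δ) (hε0 : 0 < ε) (hε1 : ε < 1) :
    ∃ c₁ c₂ : ℝ, 0 < c₁ ∧ c₁ ≤ c₂ ∧
      ∀ ξ : EuclideanSpace ℝ (Fin n), ε ≤ ‖ξ‖ → ∀ σ : ℝ, ∀ z w : ℂ,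
        c₁ * (1 / 2 * ‖ξ‖ ^ (2 * δ + σ) * ‖w‖ ^ 2
              + 1 / 2 * ‖ξ‖ ^ (2 * α + σ) * ‖z‖ ^ 2)
            ≤ 1 / 2 * (1 + ‖ξ‖ ^ (2 * δ)) * ‖ξ‖ ^ σ * ‖w‖ ^ 2
              + 1 / 2 * ‖ξ‖ ^ (2 * α + σ) * ‖z‖ ^ 2
              + rho n δ α θ ε ξ * (1 + ‖ξ‖ ^ (2 * δ)) * ‖ξ‖ ^ σ
                  * (w * starRingEnd ℂ z).re
              + 1 / 2 * rho n δ α θ ε ξ * ‖ξ‖ ^ (2 * θ + σ) * ‖z‖ ^ 2 ∧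
          1 / 2 * (1 + ‖ξ‖ ^ (2 * δ)) * ‖ξ‖ ^ σ * ‖w‖ ^ 2
              + 1 / 2 * ‖ξ‖ ^ (2 * α + σ) * ‖z‖ ^ 2
              + rho n δ α θ ε ξ * (1 + ‖ξ‖ ^ (2 * δ)) * ‖ξ‖ ^ σ
                  * (w * starRingEnd ℂ z).re
              + 1 / 2 * rho n δ α θ ε ξ * ‖ξ‖ ^ (2 * θ + σ) * ‖z‖ ^ 2
            ≤ c₂ * (1 / 2 * ‖ξ‖ ^ (2 * δ + σ) * ‖w‖ ^ 2
              + 1 / 2 * ‖ξ‖ ^ (2 * α + σ) * ‖z‖ ^ 2) := by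
  have hG : 0 < ε ^ (-(2 * δ)) := Real.rpow_pos_of_pos hε0 _
  refine ⟨1 / 2, 2 * (1 + ε ^ (-(2 * δ))), by norm_num, by linarith, fun ξ hξ σ z w => ?_⟩
  have hr : 0 < ‖ξ‖ := hε0.trans_le hξ
  have hρ : 0 ≤ rho n δ α θ ε ξ := rho_nonneg hε0
  have hk := mul_le_mul_of_nonneg_right (four_mul_rho_sq_le (α := α) (θ := θ) hδ hε0 hε1.le hξ)
    (by positivity : 0 ≤ (1 + ‖ξ‖ ^ (2 * δ)) * (‖ξ‖ ^ σ) ^ 2)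
  have ht := mul_le_mul_of_nonneg_right (two_mul_rho_mul_le (α := α) (θ := θ) hδ hε0 hε1.le hξ)
    (by positivity : 0 ≤ ‖ξ‖ ^ σ)
  have hV := one_le_rpow_neg_mul_rpow hε0 hξ (by linarith : 0 ≤ 2 * δ)
  obtain ⟨hlo, hhi⟩ := quadratic_form_bounds (z := z) (w := w)
    (a := (1 + ‖ξ‖ ^ (2 * δ)) * ‖ξ‖ ^ σ) (b := ‖ξ‖ ^ (2 * α) * ‖ξ‖ ^ σ)
    (k := rho n δ α θ ε ξ * (1 + ‖ξ‖ ^ (2 * δ)) * ‖ξ‖ ^ σ)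
    (t := rho n δ α θ ε ξ * (‖ξ‖ ^ (2 * θ) * ‖ξ‖ ^ σ))
    (by positivity) (by positivity) (by linarith) (by positivity) (by linarith)
  have hw : 0 ≤ ‖ξ‖ ^ σ * ‖w‖ ^ 2 := by positivity
  simp only [Real.rpow_add hr]
  constructor
  · linarith
  · have : 0 ≤ ε ^ (-(2 * δ)) * (‖ξ‖ ^ (2 * α) * ‖ξ‖ ^ σ * ‖z‖ ^ 2) := by positivity
    linarith [mul_le_mul_of_nonneg_right hV hw]

theorem stmt_14 (n : ℕ) (hn : 1 ≤ n) (δ α θ ε : ℝ)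
    (hδ : 0 ≤ δ) (hα : 0 ≤ α) (hθ0 : 0 ≤ θ) (hθα : θ ≤ α)
    (hε0 : 0 < ε) (hε1 : ε < 1) :
    ∃ c₁ c₂ : ℝ, 0 < c₁ ∧ c₁ ≤ c₂ ∧
      ∀ ξ : EuclideanSpace ℝ (Fin n), ε ≤ ‖ξ‖ → ∀ σ : ℝ, ∀ z w : ℂ,
        c₁ * (1 / 2 * ‖ξ‖ ^ (2 * δ + σ) * ‖w‖ ^ 2
              + 1 / 2 * ‖ξ‖ ^ (2 * α + σ) * ‖z‖ ^ 2)
            ≤ 1 / 2 * (1 + ‖ξ‖ ^ (2 * δ)) * ‖ξ‖ ^ σ * ‖w‖ ^ 2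
              + 1 / 2 * ‖ξ‖ ^ (2 * α + σ) * ‖z‖ ^ 2
              + rho n δ α θ ε ξ * (1 + ‖ξ‖ ^ (2 * δ)) * ‖ξ‖ ^ σ
                  * (w * starRingEnd ℂ z).re
              + 1 / 2 * rho n δ α θ ε ξ * ‖ξ‖ ^ (2 * θ + σ) * ‖z‖ ^ 2 ∧
          1 / 2 * (1 + ‖ξ‖ ^ (2 * δ)) * ‖ξ‖ ^ σ * ‖w‖ ^ 2
              + 1 / 2 * ‖ξ‖ ^ (2 * α + σ) * ‖z‖ ^ 2
              + rho n δ α θ ε ξ * (1 + ‖ξ‖ ^ (2 * δ)) * ‖ξ‖ ^ σ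
                  * (w * starRingEnd ℂ z).re
              + 1 / 2 * rho n δ α θ ε ξ * ‖ξ‖ ^ (2 * θ + σ) * ‖z‖ ^ 2
            ≤ c₂ * (1 / 2 * ‖ξ‖ ^ (2 * δ + σ) * ‖w‖ ^ 2
              + 1 / 2 * ‖ξ‖ ^ (2 * α + σ) * ‖z‖ ^ 2) :=
  stmt_14_general n δ α θ ε hδ hε0 hε1
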